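/- Case (I): Suppose (V, ρ, X, Y) is a representation additionally satisfying X^r = 0, Y^s = 0 (where s > 1 is the order of χ₂(g₂)), and X∘Y = χ₂(g₁)·Y∘X. If (V, ρ, X, Y) is irreducible, then dim V = 1, X = Y = 0, and there is a character η of Γ with η|_Λ = ξ such that ρ(h) = η(h)·id_V for all h ∈ Γ. -/
import Mathlib


noncomputable section

/-- `(V, ρ, X, Y)` is a representation of the common part of the rank-2 algebra `A(ξ)`:
`ρ` is a group homomorphism (recorded via multiplicativity and unitality),
`ρ(h)∘X = χ₁(h)·(X∘ρ(h))` and `ρ(h)∘Y = χ₂(h)·(Y∘ρ(h))` for all `h ∈ Γ`, and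
`ρ(g) = ξ(g)·id` for all `g ∈ Λ`. -/
def IsRep {Γ : Type*} [CommGroup Γ] (χ₁ χ₂ : Γ →* ℂˣ) (Λ : Subgroup Γ) (ξ : ↥Λ →* ℂˣ)
    {V : Type*} [AddCommGroup V] [Module ℂ V]
    (ρ : Γ → Module.End ℂ V) (X Y : Module.End ℂ V) : Prop :=
  (∀ a b : Γ, ρ (a * b) = ρ a * ρ b) ∧ ρ 1 = 1 ∧
  (∀ h : Γ, ρ h * X = (χ₁ h : ℂ) • (X * ρ h)) ∧
  (∀ h : Γ, ρ h * Y = (χ₂ h : ℂ) • (Y * ρ h)) ∧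
  ∀ g : Λ, ρ (g : Γ) = (ξ g : ℂ) • (1 : Module.End ℂ V)

/-- A subspace `W` is stable under `X`, `Y` and all `ρ(h)`. -/
def Stable2 {Γ : Type*} {V : Type*} [AddCommGroup V] [Module ℂ V]
    (ρ : Γ → Module.End ℂ V) (X Y : Module.End ℂ V) (W : Submodule ℂ V) : Prop :=
  (∀ v ∈ W, X v ∈ W) ∧ (∀ v ∈ W, Y v ∈ W) ∧ ∀ h : Γ, ∀ v ∈ W, ρ h v ∈ W

/-- Irreducibility: `V ≠ 0` and the only subspaces stable under `X`, `Y` and all `ρ(h)`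
are `0` and `V`. -/
def Irred2 {Γ : Type*} {V : Type*} [AddCommGroup V] [Module ℂ V]
    (ρ : Γ → Module.End ℂ V) (X Y : Module.End ℂ V) : Prop :=
  (∃ v : V, v ≠ 0) ∧ ∀ W : Submodule ℂ V, Stable2 ρ X Y W → W = ⊥ ∨ W = ⊤

/-- Case (I): if `(V, ρ, X, Y)` is an irreducible representation with `X^r = 0`,
`Y^s = 0` (`s > 1` the order of `χ₂(g₂)`) and `X∘Y = χ₂(g₁)·(Y∘X)`, then `dim V = 1`,
`X = Y = 0`, and `ρ` is given by a character `η` of `Γ` restricting to `ξ` on `Λ`. -/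
theorem caseI_irreducible {Γ : Type*} [CommGroup Γ] [Fintype Γ] (g₁ g₂ : Γ)
    (χ₁ χ₂ : Γ →* ℂˣ) (h12 : χ₁ g₂ * χ₂ g₁ = 1)
    (r : ℕ) (hr : 1 < r) (hq : IsPrimitiveRoot ((χ₁ g₁ : ℂˣ) : ℂ) r)
    (Λ : Subgroup Γ) (hΛ : ∀ g : Γ, g ∈ Λ ↔ (χ₁ g = 1 ∧ χ₂ g = 1)) (ξ : ↥Λ →* ℂˣ)
    (s : ℕ) (hs : 1 < s) (hso : orderOf (χ₂ g₂) = s)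
    (V : Type*) [AddCommGroup V] [Module ℂ V] [FiniteDimensional ℂ V]
    (ρ : Γ → Module.End ℂ V) (X Y : Module.End ℂ V)
    (hrep : IsRep χ₁ χ₂ Λ ξ ρ X Y)
    (hX : X ^ r = 0) (hY : Y ^ s = 0)
    (hXY : X * Y = (χ₂ g₁ : ℂ) • (Y * X))
    (hirr : Irred2 ρ X Y) :
    Module.finrank ℂ V = 1 ∧ X = 0 ∧ Y = 0 ∧
      ∃ η : Γ →* ℂˣ, (∀ g : Λ, η (g : Γ) = ξ g) ∧
        ∀ h : Γ, ρ h = (η h : ℂ) • (1 : Module.End ℂ V) := by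

  obtain ⟨hmul, hone, hcom1, hcom2, hlam⟩ := hrep
  obtain ⟨⟨v₀, hv₀⟩, hWirr⟩ := hirr
  haveI hnt : Nontrivial V := ⟨v₀, 0, hv₀⟩
  -- injectivity of nilpotent kill
  have hnil : ∀ (Z : Module.End ℂ V), Function.Injective Z →
      ∀ n : ℕ, ∀ v : V, (Z ^ n) v = 0 → v = 0 := by
    intro Z hZ n
    induction n with
    | zero => intro v hv; simpa using hv
    | succ n ih =>
      intro v hv
      rw [pow_succ, Module.End.mul_apply] at hv
      have : Z v = 0 := ih _ hv
      exact hZ (by simpa using this)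
  have hc2 : ((χ₂ g₁ : ℂˣ) : ℂ) ≠ 0 := Units.ne_zero _
  -- X = 0
  have hX0 : X = 0 := by
    have hst : Stable2 ρ X Y (LinearMap.ker X) := by
      refine ⟨?_, ?_, ?_⟩
      · intro v hv
        rw [LinearMap.mem_ker] at hv ⊢
        rw [hv]; simp
      · intro v hv
        rw [LinearMap.mem_ker] at hv ⊢
        have h := LinearMap.ext_iff.mp hXY v
        simp only [Module.End.mul_apply, LinearMap.smul_apply, hv, map_zero,
          smul_zero] at h
        exact h
      · intro h v hv
        rw [LinearMap.mem_ker] at hv ⊢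
        have hh := LinearMap.ext_iff.mp (hcom1 h) v
        simp only [Module.End.mul_apply, LinearMap.smul_apply, hv, map_zero] at hh
        have : ((χ₁ h : ℂˣ) : ℂ) • X ((ρ h) v) = 0 := hh.symm
        rcases smul_eq_zero.mp this with h0 | h0
        · exact absurd h0 (Units.ne_zero _)
        · exact h0
    rcases hWirr _ hst with hbot | htop
    · exfalso
      have hinj : Function.Injective X := LinearMap.ker_eq_bot.mp hbot
      have : (X ^ r) v₀ = 0 := by rw [hX]; rfl
      exact hv₀ (hnil X hinj r v₀ this)
    · exact LinearMap.ker_eq_top.mp htop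
  -- Y = 0
  have hY0 : Y = 0 := by
    have hst : Stable2 ρ X Y (LinearMap.ker Y) := by
      refine ⟨?_, ?_, ?_⟩
      · intro v hv
        rw [LinearMap.mem_ker] at hv ⊢
        have h := LinearMap.ext_iff.mp hXY v
        simp only [Module.End.mul_apply, LinearMap.smul_apply, hv, map_zero] at h
        have : ((χ₂ g₁ : ℂˣ) : ℂ) • Y (X v) = 0 := h.symm
        rcases smul_eq_zero.mp this with h0 | h0
        · exact absurd h0 hc2
        · exact h0
      · intro v hv
        rw [LinearMap.mem_ker] at hv ⊢
        rw [hv]; simp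
      · intro h v hv
        rw [LinearMap.mem_ker] at hv ⊢
        have hh := LinearMap.ext_iff.mp (hcom2 h) v
        simp only [Module.End.mul_apply, LinearMap.smul_apply, hv, map_zero] at hh
        have : ((χ₂ h : ℂˣ) : ℂ) • Y ((ρ h) v) = 0 := hh.symm
        rcases smul_eq_zero.mp this with h0 | h0
        · exact absurd h0 (Units.ne_zero _)
        · exact h0
    rcases hWirr _ hst with hbot | htop
    · exfalso
      have hinj : Function.Injective Y := LinearMap.ker_eq_bot.mp hbot
      have : (Y ^ s) v₀ = 0 := by rw [hY]; rfl
      exact hv₀ (hnil Y hinj s v₀ this)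
    · exact LinearMap.ker_eq_top.mp htop
  -- commutation of ρ
  have hcomm : ∀ a b : Γ, ρ a * ρ b = ρ b * ρ a := by
    intro a b
    rw [← hmul, ← hmul, mul_comm]
  -- every ρ h is scalar
  have hscalar : ∀ h : Γ, ∃ c : ℂ, ρ h = c • (1 : Module.End ℂ V) := by
    intro h
    obtain ⟨c, hc⟩ := Module.End.exists_eigenvalue (ρ h)
    refine ⟨c, ?_⟩
    have hst : Stable2 ρ X Y ((ρ h).eigenspace c) := by
      refine ⟨?_, ?_, ?_⟩
      · intro v hv; rw [hX0]; simp
      · intro v hv; rw [hY0]; simp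
      · intro h' v hv
        rw [Module.End.mem_eigenspace_iff] at hv ⊢
        have := LinearMap.ext_iff.mp (hcomm h h') v
        simp only [Module.End.mul_apply] at this
        rw [this, hv, map_smul]
    rcases hWirr _ hst with hbot | htop
    · exact absurd hbot hc
    · ext w
      have hw : w ∈ (ρ h).eigenspace c := htop ▸ Submodule.mem_top
      rw [Module.End.mem_eigenspace_iff] at hw
      simpa using hw
  set f : Γ → ℂ := fun h => Classical.choose (hscalar h) with hf_def
  have hf : ∀ h : Γ, ρ h = f h • (1 : Module.End ℂ V) := fun h =>
    Classical.choose_spec (hscalar h)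
  have hinjs : ∀ a b : ℂ, a • (1 : Module.End ℂ V) = b • 1 → a = b := by
    intro a b hab
    have h := LinearMap.ext_iff.mp hab v₀
    simp only [LinearMap.smul_apply, Module.End.one_apply] at h
    exact smul_left_injective ℂ hv₀ h
  have hf1 : f 1 = 1 := by
    apply hinjs
    rw [← hf 1, hone, one_smul]
  have hfmul : ∀ a b : Γ, f (a * b) = f a * f b := by
    intro a b
    apply hinjs
    rw [← hf (a * b), hmul, hf a, hf b, smul_mul_smul_comm, one_mul]
  have hfne : ∀ h : Γ, f h ≠ 0 := by
    intro h
    have : f h * f h⁻¹ = 1 := by rw [← hfmul, mul_inv_cancel, hf1]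
    exact left_ne_zero_of_mul_eq_one this
  refine ⟨?_, hX0, hY0, ?_⟩
  · rw [finrank_eq_one_iff_of_nonzero v₀ hv₀]
    have hst : Stable2 ρ X Y (Submodule.span ℂ {v₀}) := by
      refine ⟨?_, ?_, ?_⟩
      · intro v hv; rw [hX0]; simp
      · intro v hv; rw [hY0]; simp
      · intro h v hv
        rw [hf h]
        simpa using Submodule.smul_mem _ (f h) hv
    rcases hWirr _ hst with hbot | htop
    · exact absurd (Submodule.span_singleton_eq_bot.mp hbot) hv₀
    · exact htop
  · refine ⟨MonoidHom.mk' (fun h => Units.mk0 (f h) (hfne h)) ?_, ?_, ?_⟩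
    · intro a b
      ext
      exact hfmul a b
    · intro g
      ext
      have : f (g : Γ) = ((ξ g : ℂˣ) : ℂ) := by
        apply hinjs
        rw [← hf (g : Γ), hlam g]
      simpa using this
    · intro h
      simpa using hf h
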